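/- Newton-MacLaurin inequality: for λ in the closure of Γ_k^+ (in particular for λ with all σ_j(λ) ≥ 0, j ≤ k+1), one has (k+1)σ_{k+1}(λ) ≤ ((n−k)/n)·σ_1(λ)·σ_k(λ). -/

import Mathlib

open Finset

noncomputable def esymm (n k : ℕ) (x : Fin n → ℝ) : ℝ :=
  ∑ s ∈ (Finset.univ : Finset (Fin n)).powersetCard k, ∏ i ∈ s, x i

/-- σ_{k}(λ with i-th coordinate deleted) -/
noncomputable def esymmDel (n k : ℕ) (x : Fin n → ℝ) (i : Fin n) : ℝ :=
  ∑ s ∈ ((Finset.univ : Finset (Fin n)).erase i).powersetCard k, ∏ j ∈ s, x j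

def GammaPlus (n k : ℕ) : Set (Fin n → ℝ) :=
  {x | ∀ j : ℕ, 1 ≤ j → j ≤ k → 0 < esymm n j x}

/-!
Write `E_j = σ_j / C(n, j)`. By Rolle's theorem the derivative of `∏ i, (X - λ_i)` has `n - 1`
real roots, and comparing coefficients shows that they have the same `E_j` as `λ` for `j ≤ n - 1`.
Hence Newton's inequality `E_{j-1} E_{j+1} ≤ E_j²` reduces to the case `n = j + 1`. There, with
`P_i = ∏_{l ≠ i} λ_l`, one has `σ_j = ∑ P_i` and `(∑ P_i)² - ∑ P_i² = 2 σ_{j-1} σ_{j+1}`, and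
Cauchy–Schwarz `(∑ P_i)² ≤ n ∑ P_i²` gives the inequality.
On `Γ_k^+` the `E_j` with `j ≤ k` are positive, so log-concavity yields `E_{j+1} ≤ E_1 E_j` for
`j ≤ k` by induction on `j`; for `j = k` this is the claim once the binomial coefficients are
cleared.
-/

theorem Multiset.esymm_cons_succ {R : Type*} [CommSemiring R] (a : R) (s : Multiset R) (k : ℕ) :
    (a ::ₘ s).esymm (k + 1) = a * s.esymm k + s.esymm (k + 1) := by
  simp only [Multiset.esymm, Multiset.powersetCard_cons, Multiset.map_add, Multiset.sum_add,
    Multiset.map_map, Function.comp_def, Multiset.prod_cons, Multiset.sum_map_mul_left]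
  ring

theorem Multiset.exists_univ_map_eq {α : Type*} (t : Multiset α) {N : ℕ} (ht : card t = N) :
    ∃ y : Fin N → α, univ.val.map y = t := by
  rw [← Multiset.coe_toList t] at ht ⊢
  generalize t.toList = l at ht ⊢
  rw [Multiset.coe_card] at ht
  subst ht
  exact ⟨fun i => l[i.1], by rw [Fin.univ_val_map, List.ofFn_getElem]⟩

open Polynomial in
theorem Multiset.exists_esymm_roots_derivative (s : Multiset ℝ) {N : ℕ} (hs : card s = N + 1) :
    ∃ t : Multiset ℝ, card t = N ∧
      ∀ m ≤ N, ((N : ℝ) + 1) * t.esymm m = ((N : ℝ) + 1 - m) * s.esymm m := by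
  set p : ℝ[X] := (s.map fun a => X - C a).prod
  have hp_roots : p.roots = s := roots_multiset_prod_X_sub_C s
  have hp_coeff : ∀ m ≤ N + 1, p.coeff (N + 1 - m) = (-1) ^ m * s.esymm m := by
    intro m hm
    rw [prod_X_sub_C_coeff s (by omega), hs, Nat.sub_sub_self hm]
  have hq_coeff : ∀ m ≤ N,
      (derivative p).coeff (N - m) = (-1) ^ m * s.esymm m * (N + 1 - m) := by
    intro m hm
    rw [coeff_derivative, show N - m + 1 = N + 1 - m by omega, hp_coeff m (by omega),
      Nat.cast_sub hm]
    ring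
  have hq_lead : (derivative p).coeff N = N + 1 := by
    simpa [Multiset.esymm] using hq_coeff 0 (Nat.zero_le N)
  have hq_deg : (derivative p).natDegree = N := natDegree_eq_of_le_of_coeff_ne_zero
    ((natDegree_derivative_le p).trans (by rw [natDegree_multiset_prod_X_sub_C_eq_card, hs]; omega))
    (by rw [hq_lead]; positivity)
  have hq_roots : card (derivative p).roots = N := le_antisymm (hq_deg ▸ card_roots' _)
    (by have := card_roots_le_derivative p; rw [hp_roots, hs] at this; omega)
  have hq_split :
      C (N + 1 : ℝ) * ((derivative p).roots.map fun a => X - C a).prod = derivative p := by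
    rw [← hq_lead, ← hq_deg]
    exact C_leadingCoeff_mul_prod_multiset_X_sub_C (hq_roots.trans hq_deg.symm)
  refine ⟨(derivative p).roots, hq_roots, fun m hm => ?_⟩
  have hcoeff := congrArg (coeff · (N - m)) hq_split
  have hroots_coeff := prod_X_sub_C_coeff (derivative p).roots (k := N - m) (by omega)
  rw [hq_roots, Nat.sub_sub_self hm] at hroots_coeff
  rw [coeff_C_mul, hroots_coeff, hq_coeff m hm] at hcoeff
  apply mul_left_cancel₀ (pow_ne_zero m (neg_ne_zero.2 one_ne_zero) : ((-1 : ℝ) ^ m) ≠ 0)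
  linear_combination hcoeff

section esymm

variable {n : ℕ} (x : Fin n → ℝ)

theorem esymm_eq_multiset_esymm (k : ℕ) : esymm n k x = (univ.val.map x).esymm k :=
  (esymm_map_val x univ k).symm

theorem esymmDel_eq_multiset_esymm (k : ℕ) (i : Fin n) :
    esymmDel n k x i = ((univ.erase i).val.map x).esymm k :=
  (esymm_map_val x _ k).symm

@[simp]
theorem esymm_zero : esymm n 0 x = 1 := by simp [esymm]

theorem esymm_succ (k : ℕ) (i : Fin n) :
    esymm n (k + 1) x = x i * esymmDel n k x i + esymmDel n (k + 1) x i := by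
  rw [esymm_eq_multiset_esymm, esymmDel_eq_multiset_esymm, esymmDel_eq_multiset_esymm,
    ← Multiset.cons_erase (mem_univ_val i), ← erase_val, Multiset.map_cons,
    Multiset.esymm_cons_succ]

theorem esymmDel_of_le {k : ℕ} (hk : n ≤ k) (i : Fin n) : esymmDel n k x i = 0 := by
  have hcard : #(univ.erase i) < k := by
    rw [card_erase_of_mem (mem_univ i), card_univ, Fintype.card_fin]
    have := i.pos
    omega
  rw [esymmDel, powersetCard_eq_empty.2 hcard, sum_empty]

theorem sum_esymmDel (k : ℕ) : ∑ i, esymmDel n k x i = (n - k : ℕ) * esymm n k x := by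
  rw [esymm, mul_sum]
  unfold esymmDel
  rw [sum_comm' (t' := univ.powersetCard k) (s' := fun t => tᶜ) fun i t => by
    simp only [mem_powersetCard, subset_erase, mem_compl, mem_univ, subset_univ]; tauto]
  refine sum_congr rfl fun t ht => ?_
  rw [sum_const, card_compl, Fintype.card_fin, (mem_powersetCard.1 ht).2, nsmul_eq_mul]

end esymm

theorem two_mul_esymm_mul_esymm_le {m : ℕ} (x : Fin (m + 2) → ℝ) :
    2 * (m + 2) * (esymm _ m x * esymm _ (m + 2) x) ≤ (m + 1) * esymm _ (m + 1) x ^ 2 := by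
  set P := esymmDel (m + 2) (m + 1) x
  have hsum : ∑ i, P i = esymm _ (m + 1) x := by
    simp [P, sum_esymmDel, show m + 2 - (m + 1) = 1 by omega]
  have hcross : ∀ i,
      P i * (esymm _ (m + 1) x - P i) = esymm _ (m + 2) x * esymmDel _ m x i := by
    intro i
    rw [esymm_succ x (m + 1) i, esymmDel_of_le x le_rfl, esymm_succ x m i]
    ring
  have hcross_sum :
      esymm _ (m + 1) x ^ 2 - ∑ i, P i ^ 2 = 2 * (esymm _ m x * esymm _ (m + 2) x) := by
    have := Finset.sum_congr rfl fun i (_ : i ∈ univ) => hcross i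
    rw [← mul_sum, sum_esymmDel, show m + 2 - m = 2 by omega] at this
    simp only [mul_sub, sum_sub_distrib, ← sum_mul, hsum, ← sq] at this
    push_cast at this
    linear_combination this
  have hcs : esymm _ (m + 1) x ^ 2 ≤ (m + 2) * ∑ i, P i ^ 2 := by
    simpa [hsum, add_comm] using sq_sum_le_card_mul_sum_sq (s := univ) (f := P)
  nlinarith

noncomputable def esymmMean (n k : ℕ) (x : Fin n → ℝ) : ℝ :=
  esymm n k x / n.choose k

@[simp]
theorem esymmMean_zero {n : ℕ} (x : Fin n → ℝ) : esymmMean n 0 x = 1 := by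
  simp [esymmMean]

theorem esymmMean_one {n : ℕ} (x : Fin n → ℝ) : esymmMean n 1 x = esymm n 1 x / n := by
  simp [esymmMean]

theorem esymmMean_pos {n k j : ℕ} {x : Fin n → ℝ} (hx : x ∈ GammaPlus n k) (hkn : k ≤ n)
    (hj : j ≤ k) : 0 < esymmMean n j x := by
  rcases Nat.eq_zero_or_pos j with rfl | hj0
  · simp
  · exact div_pos (hx j hj0 hj) (by exact_mod_cast Nat.choose_pos (by omega))

theorem exists_esymmMean_eq {N : ℕ} (x : Fin (N + 1) → ℝ) :
    ∃ y : Fin N → ℝ, ∀ m ≤ N, esymmMean N m y = esymmMean (N + 1) m x := by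
  obtain ⟨t, ht, hesymm⟩ := (univ.val.map x).exists_esymm_roots_derivative (N := N) (by simp)
  obtain ⟨y, rfl⟩ := t.exists_univ_map_eq ht
  refine ⟨y, fun m hm => ?_⟩
  have hchoose := congrArg (Nat.cast : ℕ → ℝ) (Nat.choose_mul_succ_eq N m)
  push_cast [Nat.cast_sub (show m ≤ N + 1 by omega)] at hchoose
  have hpos : (0 : ℝ) < N.choose m := by exact_mod_cast Nat.choose_pos hm
  have hpos' : (0 : ℝ) < (N + 1).choose m := by exact_mod_cast Nat.choose_pos (by omega)
  have hm' : (m : ℝ) < N + 1 := by exact_mod_cast Nat.lt_succ_of_le hm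
  rw [esymmMean, esymmMean, esymm_eq_multiset_esymm, esymm_eq_multiset_esymm,
    div_eq_div_iff hpos.ne' hpos'.ne']
  apply mul_right_cancel₀ (mul_pos (sub_pos.2 hm') (by positivity : (0 : ℝ) < N + 1)).ne'
  linear_combination ((N + 1).choose m * ((N : ℝ) + 1 - m)) * hesymm m hm
    - ((univ.val.map x).esymm m * ((N : ℝ) + 1 - m)) * hchoose

theorem esymmMean_mul_le_sq {j n : ℕ} (h : j + 2 ≤ n) (x : Fin n → ℝ) :
    esymmMean n j x * esymmMean n (j + 2) x ≤ esymmMean n (j + 1) x ^ 2 := by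
  induction n, h using Nat.le_induction with
  | base =>
    have hchoose : ((j + 2).choose j : ℝ) = (j + 2) * (j + 1) / 2 := by
      rw [Nat.choose_symm_add, Nat.cast_choose_two]; push_cast; ring
    have hchoose' : ((j + 2).choose (j + 1) : ℝ) = j + 2 := by
      rw [Nat.choose_succ_self_right]; push_cast; ring
    simp only [esymmMean, hchoose, hchoose', Nat.choose_self, Nat.cast_one, div_one]
    rw [div_mul_eq_mul_div, div_pow, div_le_div_iff₀ (by positivity) (by positivity)]
    nlinarith [two_mul_esymm_mul_esymm_le x]
  | succ n hn ih =>
    obtain ⟨y, hy⟩ := exists_esymmMean_eq x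
    rw [← hy j (by omega), ← hy (j + 1) (by omega), ← hy (j + 2) hn]
    exact ih y

theorem apply_succ_le_mul_apply_of_mul_le_sq {a : ℕ → ℝ} {k : ℕ} (h0 : a 0 = 1)
    (hpos : ∀ j ≤ k, 0 < a j) (hlc : ∀ j < k, a j * a (j + 2) ≤ a (j + 1) ^ 2) :
    a (k + 1) ≤ a 1 * a k := by
  induction k with
  | zero => simp [h0]
  | succ k ih =>
    have hprev := ih (fun j hj => hpos j (by omega)) (fun j hj => hlc j (by omega))
    have hsq : a (k + 1) ^ 2 ≤ a k * (a 1 * a (k + 1)) := by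
      nlinarith [mul_le_mul_of_nonneg_left hprev (hpos (k + 1) le_rfl).le]
    exact le_of_mul_le_mul_left ((hlc k (by omega)).trans hsq) (hpos k (by omega))

theorem stmt_7_general (n k : ℕ) (hk : 1 ≤ k) (hkn : k ≤ n - 1) (x : Fin n → ℝ)
    (hx : x ∈ GammaPlus n k) :
    (k + 1 : ℝ) * esymm n (k + 1) x ≤ ((n - k : ℝ) / n) * esymm n 1 x * esymm n k x := by
  have hkn' : k < n := by omega
  have hmean : esymmMean n (k + 1) x ≤ esymmMean n 1 x * esymmMean n k x :=
    apply_succ_le_mul_apply_of_mul_le_sq (esymmMean_zero x)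
      (fun j hj => esymmMean_pos hx hkn'.le hj) (fun j _ => esymmMean_mul_le_sq (by omega) x)
  have hchoose := congrArg (Nat.cast : ℕ → ℝ) (Nat.choose_succ_right_eq n k)
  push_cast [Nat.cast_sub hkn'.le] at hchoose
  have hn : (0 : ℝ) < n := by exact_mod_cast (Nat.zero_lt_one.trans_le hk).trans hkn'
  have hCk : (0 : ℝ) < n.choose k := by exact_mod_cast Nat.choose_pos hkn'.le
  have hCk1 : (0 : ℝ) < n.choose (k + 1) := by exact_mod_cast Nat.choose_pos hkn'
  rw [esymmMean_one, esymmMean, esymmMean, div_le_iff₀ hCk1] at hmean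
  calc (k + 1 : ℝ) * esymm n (k + 1) x
      ≤ (k + 1) * (esymm n 1 x / n * (esymm n k x / n.choose k) * n.choose (k + 1)) := by
        gcongr
    _ = ((n - k : ℝ) / n) * esymm n 1 x * esymm n k x := by
      field_simp
      linear_combination esymm n 1 x * esymm n k x * hchoose

theorem stmt_7 (n k : ℕ) (hk : 1 ≤ k) (hkn : k ≤ n - 1) (x : Fin n → ℝ)
    (hx : x ∈ GammaPlus n k) (hk1 : 0 ≤ esymm n (k + 1) x) :
    (k + 1 : ℝ) * esymm n (k + 1) x ≤ ((n - k : ℝ) / n) * esymm n 1 x * esymm n k x :=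
  stmt_7_general n k hk hkn x hx
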